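/- arXiv:1409.5401 — 2 statements merged into one kernel-verified Lean document; each statement's English description precedes it below -/
import Mathlib

section
/- Let A be an in-weighting on a digraph G = (V,E) with (ν_j, ν_i) ∈ E, and let Ā be an in-weighting on Ḡ = (V, E∖{(ν_j, ν_i)}) with ā_{ij} = 0 and ā_{qr} = a_{qr} for all q ≠ i and all r. Then for every vertex ν_p and every s ∈ ℕ with s ≤ dist(G; ν_j, ν_p) − 1, the (p,i) entries of the matrix powers agree: [Ā^s]_{pi} = [A^s]_{pi} (equivalently, Φ(Ω^s(Ḡ; ν_i, ν_p), Ā) = Φ(Ω^s(G; ν_i, ν_p), A)). -/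
open Finset

/-- The finite set of walks of length `k` from `q` to `p` in the digraph on `Fin n`
with edge set `E`, encoded as vertex sequences `f : Fin (k+1) → Fin n`. -/
def walks (n : ℕ) (E : Finset (Fin n × Fin n)) (k : ℕ) (q p : Fin n) :
    Finset (Fin (k + 1) → Fin n) :=
  Finset.univ.filter fun f : Fin (k + 1) → Fin n =>
    (∀ i : Fin k, (f i.castSucc, f i.succ) ∈ E) ∧ f 0 = q ∧ f (Fin.last k) = p

/-- Walks of length `k` from `q` to `p` whose first edge is `(q, r)`. -/
def walksThrough (n : ℕ) (E : Finset (Fin n × Fin n)) (k : ℕ) (q r p : Fin n) :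
    Finset (Fin (k + 1) → Fin n) :=
  (walks n E k q p).filter fun f => f 1 = r

/-- Weight of a walk w.r.t. an in-weighting `A`: each edge `(u, v)` contributes `A v u`. -/
def walkWeight {n k : ℕ} (A : Matrix (Fin n) (Fin n) ℝ) (f : Fin (k + 1) → Fin n) : ℝ :=
  ∏ i : Fin k, A (f i.succ) (f i.castSucc)

/-- `Φ(Ω, A)`: sum of the weights of the walks in `Ω` w.r.t. `A`. -/
def phi {n k : ℕ} (A : Matrix (Fin n) (Fin n) ℝ) (Ω : Finset (Fin (k + 1) → Fin n)) : ℝ :=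
  ∑ f ∈ Ω, walkWeight A f

/-- Distance from `q` to `p` in the digraph: the least length of a walk, `⊤` if none. -/
noncomputable def gdist (n : ℕ) (E : Finset (Fin n × Fin n)) (q p : Fin n) : ℕ∞ :=
  ⨅ m ∈ {m : ℕ | (walks n E m q p).Nonempty}, (m : ℕ∞)

/-- Diameter of the digraph. -/
noncomputable def gdiam (n : ℕ) (E : Finset (Fin n × Fin n)) : ℕ∞ :=
  ⨆ q : Fin n, ⨆ p : Fin n, gdist n E q p

/-- `A` is an in-weighting on the digraph with edge set `E`. -/
def IsInWeighting {n : ℕ} (E : Finset (Fin n × Fin n))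
    (A : Matrix (Fin n) (Fin n) ℝ) : Prop :=
  ∀ p q : Fin n, (q, p) ∉ E → A p q = 0

/-- `Δ_{t_f}(p, k)`: jump of the `k`-th one-sided derivatives of `x_p` at `t_f`. -/
noncomputable def jump {n : ℕ} (x : ℝ → Fin n → ℝ) (tf : ℝ) (p : Fin n) (k : ℕ) : ℝ :=
  iteratedDerivWithin k (fun t => x t p) (Set.Ici tf) tf
    - iteratedDerivWithin k (fun t => x t p) (Set.Iic tf) tf

/-! Since `(j, i) ∈ E`, `dist(i, p) ≥ dist(j, p) - 1 ≥ s`, so a walk of length `s` from `i` to `p`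
never comes back to `i`: its tail from such a return would be a shorter walk from `i` to `p`. Hence
no such walk uses the deleted edge `(j, i)` or reads an entry of row `i`, and the walk sums in `Ḡ`
and `G` agree term by term. The matrix entries are these walk sums: `(A ^ s) p q` is the sum of walk
weights over all vertex tuples, and tuples leaving the digraph weigh zero under an in-weighting. -/

section Walks

variable {n : ℕ} {E : Finset (Fin n × Fin n)} {k : ℕ} {q p : Fin n} {f : Fin (k + 1) → Fin n}

lemma mem_walks :
    f ∈ walks n E k q p ↔
      (∀ t : Fin k, (f t.castSucc, f t.succ) ∈ E) ∧ f 0 = q ∧ f (Fin.last k) = p := by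
  simp [walks]

lemma walks_mono {E' : Finset (Fin n × Fin n)} (h : E ⊆ E') :
    walks n E k q p ⊆ walks n E' k q p := fun _ hf =>
  let ⟨hedge, h0, hl⟩ := mem_walks.1 hf
  mem_walks.2 ⟨fun t => h (hedge t), h0, hl⟩

lemma cons_mem_walks {r : Fin n} (hE : (r, q) ∈ E) (hf : f ∈ walks n E k q p) :
    (Fin.cons r f : Fin (k + 2) → Fin n) ∈ walks n E (k + 1) r p := by
  obtain ⟨hedge, h0, hl⟩ := mem_walks.1 hf
  refine mem_walks.2 ⟨Fin.cases (by simpa [h0] using hE) fun t => ?_, rfl, by simpa using hl⟩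
  simpa [← Fin.succ_castSucc] using hedge t

lemma gdist_le_of_mem_walks (hf : f ∈ walks n E k q p) : gdist n E q p ≤ k :=
  iInf₂_le k ⟨f, hf⟩

lemma gdist_sub_one_le {r : Fin n} (hE : (r, q) ∈ E) : gdist n E r p - 1 ≤ gdist n E q p :=
  le_iInf₂ fun _ ⟨_, hf⟩ => tsub_le_iff_right.2 <| by
    exact_mod_cast gdist_le_of_mem_walks (cons_mem_walks hE hf)

/-- The tail of a walk from time `t` on is a walk of length `k - t` starting at `f t`. -/
lemma gdist_apply_le_of_mem_walks (hf : f ∈ walks n E k q p) (t : Fin (k + 1)) :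
    gdist n E (f t) p ≤ (k - t : ℕ) := by
  obtain ⟨hedge, -, hl⟩ := mem_walks.1 hf
  refine gdist_le_of_mem_walks (f := fun m : Fin (k - t + 1) => f ⟨t + m, by omega⟩)
    (mem_walks.2 ⟨fun m => hedge ⟨t + m, by omega⟩, rfl, ?_⟩)
  convert hl using 2
  ext
  simp only [Fin.val_last]
  omega

lemma apply_succ_ne_of_le_gdist (hk : (k : ℕ∞) ≤ gdist n E q p) (hf : f ∈ walks n E k q p)
    (t : Fin k) : f t.succ ≠ q := by
  intro hq
  have := hk.trans (hq ▸ gdist_apply_le_of_mem_walks hf t.succ)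
  simp only [Nat.cast_le, Fin.val_succ] at this
  omega

lemma walks_erase_eq_of_le_gdist {r : Fin n} (hk : (k : ℕ∞) ≤ gdist n E q p) :
    walks n (E.erase (r, q)) k q p = walks n E k q p := by
  refine (walks_mono (erase_subset _ _)).antisymm fun f hf => ?_
  obtain ⟨hedge, h0, hl⟩ := mem_walks.1 hf
  refine mem_walks.2 ⟨fun t => mem_erase.2 ⟨fun h => ?_, hedge t⟩, h0, hl⟩
  exact apply_succ_ne_of_le_gdist hk hf t (congrArg Prod.snd h)

end Walks

section Weights

variable {n k : ℕ} {A B : Matrix (Fin n) (Fin n) ℝ}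

lemma phi_walks_eq_of_rows_eq {E : Finset (Fin n × Fin n)} {q p : Fin n}
    (hk : (k : ℕ∞) ≤ gdist n E q p) (hrow : ∀ r r', r ≠ q → B r r' = A r r') :
    phi B (walks n E k q p) = phi A (walks n E k q p) :=
  sum_congr rfl fun _ hf => prod_congr rfl fun t _ =>
    hrow _ _ (apply_succ_ne_of_le_gdist hk hf t)

lemma walkWeight_cons (x : Fin n) (g : Fin (k + 1) → Fin n) :
    walkWeight A (Fin.cons x g : Fin (k + 2) → Fin n) = A (g 0) x * walkWeight A g := by
  simp [walkWeight, Fin.prod_univ_succ]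

lemma walks_univ (q p : Fin n) :
    walks n univ k q p = univ.filter fun f => f 0 = q ∧ f (Fin.last k) = p := by
  simp [walks]

lemma pow_apply_eq_phi_walks_univ (q p : Fin n) : (A ^ k) p q = phi A (walks n univ k q p) := by
  induction k generalizing q with
  | zero =>
    simp only [phi, walks_univ, sum_filter]
    rw [← (Equiv.funUnique (Fin 1) (Fin n)).symm.sum_comp]
    simp [walkWeight, Matrix.one_apply, ite_and, @eq_comm _ p]
  | succ k ih =>
    simp only [pow_succ, Matrix.mul_apply, ih, phi, walks_univ, sum_filter, sum_mul]
    rw [← (Fin.consEquiv _).sum_comp, Fintype.sum_prod_type, sum_comm]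
    simp [Fin.consEquiv, walkWeight_cons, ite_and, mul_comm]

lemma phi_walks_eq_of_subset {E E' : Finset (Fin n × Fin n)} (hA : IsInWeighting E A)
    (h : E ⊆ E') (q p : Fin n) : phi A (walks n E k q p) = phi A (walks n E' k q p) := by
  refine sum_subset (walks_mono h) fun f hf hfE => ?_
  obtain ⟨t, ht⟩ : ∃ t : Fin k, (f t.castSucc, f t.succ) ∉ E := by
    by_contra! hedge
    exact hfE (mem_walks.2 ⟨hedge, (mem_walks.1 hf).2⟩)
  exact prod_eq_zero (mem_univ t) (hA _ _ ht)

lemma pow_apply_eq_phi {E : Finset (Fin n × Fin n)} (hA : IsInWeighting E A) (q p : Fin n) :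
    (A ^ k) p q = phi A (walks n E k q p) := by
  rw [pow_apply_eq_phi_walks_univ, phi_walks_eq_of_subset hA (subset_univ E)]

end Weights

theorem pow_entry_unchanged_general {n : ℕ} (E : Finset (Fin n × Fin n))
    (A Abar : Matrix (Fin n) (Fin n) ℝ)
    (j i p : Fin n) (hE : (j, i) ∈ E)
    (hA : IsInWeighting E A)
    (hAbar : IsInWeighting (E.erase (j, i)) Abar)
    (hrow : ∀ q r : Fin n, q ≠ i → Abar q r = A q r)
    (s : ℕ) (hs : (s : ℕ∞) ≤ gdist n E j p - 1) :
    (Abar ^ s) p i = (A ^ s) p i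
      ∧ phi Abar (walks n (E.erase (j, i)) s i p) = phi A (walks n E s i p) := by
  have hdist : (s : ℕ∞) ≤ gdist n E i p := hs.trans (gdist_sub_one_le hE)
  have hphi : phi Abar (walks n (E.erase (j, i)) s i p) = phi A (walks n E s i p) := by
    rw [walks_erase_eq_of_le_gdist hdist, phi_walks_eq_of_rows_eq hdist hrow]
  exact ⟨by rw [pow_apply_eq_phi hAbar, pow_apply_eq_phi hA, hphi], hphi⟩

/-- with `A` an in-weighting on `G`, `(j, i) ∈ E`, and `Ā` an
in-weighting on `Ḡ = G - (j, i)` agreeing with `A` off row `i` and with `ā_{ij} = 0`,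
for every `s ≤ dist(G; j, p) - 1` the `(p, i)` entries of the matrix powers agree,
equivalently `Φ(Ω^s(Ḡ; i, p), Ā) = Φ(Ω^s(G; i, p), A)`. -/
theorem pow_entry_unchanged {n : ℕ} (E : Finset (Fin n × Fin n))
    (A Abar : Matrix (Fin n) (Fin n) ℝ)
    (j i p : Fin n) (hE : (j, i) ∈ E)
    (hA : IsInWeighting E A)
    (hAbar : IsInWeighting (E.erase (j, i)) Abar)
    (hij : Abar i j = 0)
    (hrow : ∀ q r : Fin n, q ≠ i → Abar q r = A q r)
    (s : ℕ) (hs : (s : ℕ∞) ≤ gdist n E j p - 1) :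
    (Abar ^ s) p i = (A ^ s) p i
      ∧ phi Abar (walks n (E.erase (j, i)) s i p) = phi A (walks n E s i p) :=
  pow_entry_unchanged_general E A Abar j i p hE hA hAbar hrow s hs
end

section
/- Let A, Ā ∈ ℝ^{n×n}, B ∈ ℝ^{n×m}, let t_f ∈ ℝ, let w : ℝ → ℝ^m be k-times continuously differentiable in a neighborhood of t_f, and let x : ℝ → ℝ^n be continuous at t_f, satisfy ẋ(t) = A x(t) + B w(t) for t < t_f, and ẋ(t) = Ā x(t) + B w(t) for t > t_f. Then for every k ≥ 1 and every p ∈ {1,…,n}, the jump of the k-th one-sided derivative of x_p at t_f satisfies Δ_{t_f}(p,k) = e_p^T (Ā^k − A^k) x(t_f) + e_p^T (Ā^{k−1} − A^{k−1}) B w(t_f) + Σ_{m=0}^{k−2} e_p^T (Ā^m − A^m) B w^{(k−m−1)}(t_f). -/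
open Set Filter Topology
open scoped Matrix

section IteratedDeriv

variable {𝕜 F : Type*} [NontriviallyNormedField 𝕜] [NormedAddCommGroup F] [NormedSpace 𝕜 F]

theorem ContDiffAt.differentiableAt_iteratedDeriv {f : 𝕜 → F} {x : 𝕜} {n : WithTop ℕ∞} {m : ℕ}
    (hf : ContDiffAt 𝕜 n f x) (hmn : m < n) : DifferentiableAt 𝕜 (iteratedDeriv m f) x := by
  have hev : iteratedDeriv m f = fun y => ContinuousMultilinearMap.apply 𝕜 (fun _ : Fin m => 𝕜) F
      (fun _ => 1) (iteratedFDeriv 𝕜 m f y) := by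
    ext y
    exact iteratedDeriv_eq_iteratedFDeriv
  rw [hev]
  exact (ContinuousLinearMap.differentiableAt _).comp x (hf.differentiableAt_iteratedFDeriv hmn)

theorem ContDiffAt.eventually_hasDerivAt_iteratedDeriv {f : 𝕜 → F} {x : 𝕜} {n : ℕ}
    (hf : ContDiffAt 𝕜 n f x) :
    ∀ᶠ y in 𝓝 x, ∀ j < n, HasDerivAt (iteratedDeriv j f) (iteratedDeriv (j + 1) f y) y := by
  filter_upwards [hf.eventually (by simp)] with y hy j hj
  rw [iteratedDeriv_succ]
  exact (hy.differentiableAt_iteratedDeriv (by exact_mod_cast hj)).hasDerivAt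

theorem iteratedDerivWithin_eventuallyEq_of_hasDerivWithinAt {F' : ℕ → 𝕜 → F} {s : Set 𝕜}
    {a : 𝕜} {k : ℕ} (hs : UniqueDiffOn 𝕜 s)
    (hF : ∀ᶠ t in 𝓝[s] a, ∀ j < k, HasDerivWithinAt (F' j) (F' (j + 1) t) s t) :
    iteratedDerivWithin k (F' 0) s =ᶠ[𝓝[s] a] F' k := by
  induction k with
  | zero => exact .of_eq iteratedDerivWithin_zero
  | succ k ih =>
    have ih' := eventually_eventually_nhdsWithin.2
      (ih (hF.mono fun t ht j hj => ht j (by omega)))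
    filter_upwards [ih', hF, self_mem_nhdsWithin] with t hnear hderiv hts
    replace hnear : iteratedDerivWithin k (F' 0) s =ᶠ[𝓝[s] t] F' k := hnear
    rw [iteratedDerivWithin_succ, hnear.derivWithin_eq (hnear.eq_of_nhdsWithin hts)]
    exact (hderiv k k.lt_succ_self).derivWithin (hs t hts)

end IteratedDeriv

section OneSided

variable {E : Type*} [NormedAddCommGroup E] [NormedSpace ℝ E]

theorem hasDerivWithinAt_Ici_of_hasDerivAt_of_gt {f g : ℝ → E} {a : ℝ}
    (hderiv : ∀ t > a, HasDerivAt f (g t) t) (hf : ContinuousWithinAt f (Ici a) a)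
    (hg : ContinuousWithinAt g (Ioi a) a) :
    ∀ t ∈ Ici a, HasDerivWithinAt f (g t) (Ici a) t := by
  intro t ht
  rcases (mem_Ici.1 ht).eq_or_lt with rfl | hlt
  · refine hasDerivWithinAt_Ici_of_tendsto_deriv
      (fun y hy => (hderiv y hy).differentiableAt.differentiableWithinAt)
      (hf.mono Ioi_subset_Ici_self) self_mem_nhdsWithin (hg.congr' ?_)
    filter_upwards [self_mem_nhdsWithin] with y hy using (hderiv y hy).deriv.symm
  · exact (hderiv t hlt).hasDerivWithinAt

theorem hasDerivWithinAt_Iic_of_hasDerivAt_of_lt {f g : ℝ → E} {a : ℝ}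
    (hderiv : ∀ t < a, HasDerivAt f (g t) t) (hf : ContinuousWithinAt f (Iic a) a)
    (hg : ContinuousWithinAt g (Iio a) a) :
    ∀ t ∈ Iic a, HasDerivWithinAt f (g t) (Iic a) t := by
  intro t ht
  rcases (mem_Iic.1 ht).eq_or_lt with rfl | hlt
  · refine hasDerivWithinAt_Iic_of_tendsto_deriv
      (fun y hy => (hderiv y hy).differentiableAt.differentiableWithinAt)
      (hf.mono Iio_subset_Iic_self) self_mem_nhdsWithin (hg.congr' ?_)
    filter_upwards [self_mem_nhdsWithin] with y hy using (hderiv y hy).deriv.symm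
  · exact (hderiv t hlt).hasDerivWithinAt

end OneSided

section LinearODE

variable {𝕜 : Type*} [NontriviallyNormedField 𝕜] {ι κ : Type*} [Fintype κ]

theorem HasDerivWithinAt.matrix_mulVec {f : 𝕜 → κ → 𝕜} {f' : κ → 𝕜} {s : Set 𝕜} {t : 𝕜}
    (M : Matrix ι κ 𝕜) (hf : HasDerivWithinAt f f' s t) :
    HasDerivWithinAt (fun y => M *ᵥ f y) (M *ᵥ f') s t :=
  hasDerivWithinAt_pi.2 fun i =>
    HasDerivWithinAt.fun_sum fun j _ => (hasDerivWithinAt_pi.1 hf j).const_mul (M i j)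

variable [Fintype ι] (M : Matrix ι ι 𝕜) (B : Matrix ι κ 𝕜) (w : 𝕜 → κ → 𝕜) (x : 𝕜 → ι → 𝕜)

noncomputable def linODEDeriv : ℕ → 𝕜 → ι → 𝕜
  | 0 => x
  | j + 1 => fun t => M *ᵥ linODEDeriv j t + B *ᵥ iteratedDeriv j w t

theorem linODEDeriv_eq [DecidableEq ι] (j : ℕ) (t : 𝕜) :
    linODEDeriv M B w x j t =
      M ^ j *ᵥ x t + ∑ r ∈ Finset.range j, M ^ r *ᵥ B *ᵥ iteratedDeriv (j - r - 1) w t := by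
  induction j with
  | zero => simp [linODEDeriv]
  | succ j ih =>
    simp only [linODEDeriv, ih, Finset.sum_range_succ', Matrix.mulVec_add, Matrix.mulVec_sum,
      pow_succ', ← Matrix.mulVec_mulVec, pow_zero, Matrix.one_mulVec, Nat.add_sub_add_right,
      Nat.sub_zero, Nat.add_sub_cancel]
    abel

variable {M B w x}

theorem hasDerivWithinAt_linODEDeriv {s : Set 𝕜} {t : 𝕜} {k : ℕ}
    (hx : HasDerivWithinAt x (M *ᵥ x t + B *ᵥ w t) s t)
    (hw : ∀ j < k, HasDerivWithinAt (iteratedDeriv j w) (iteratedDeriv (j + 1) w t) s t) :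
    HasDerivWithinAt (linODEDeriv M B w x k) (linODEDeriv M B w x (k + 1) t) s t := by
  induction k with
  | zero => simpa [linODEDeriv] using hx
  | succ k ih =>
    exact ((ih fun j hj => hw j (by omega)).matrix_mulVec M).add
      ((hw k k.lt_succ_self).matrix_mulVec B)

theorem iteratedDerivWithin_eq_linODEDeriv {s : Set 𝕜} {a : 𝕜} {k : ℕ} (hs : UniqueDiffOn 𝕜 s)
    (ha : a ∈ s) (hx : ∀ᶠ t in 𝓝[s] a, HasDerivWithinAt x (M *ᵥ x t + B *ᵥ w t) s t)
    (hw : ∀ᶠ t in 𝓝[s] a,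
      ∀ j < k, HasDerivWithinAt (iteratedDeriv j w) (iteratedDeriv (j + 1) w t) s t)
    (p : ι) :
    iteratedDerivWithin k (fun t => x t p) s a = linODEDeriv M B w x k a p := by
  have hderiv : ∀ᶠ t in 𝓝[s] a, ∀ j < k, HasDerivWithinAt (fun t => linODEDeriv M B w x j t p)
      (linODEDeriv M B w x (j + 1) t p) s t := by
    filter_upwards [hx, hw] with t hxt hwt j hj
    have hvec := hasDerivWithinAt_linODEDeriv (k := j) hxt fun i hi => hwt i (by omega)
    exact hasDerivWithinAt_pi.1 hvec p
  exact (iteratedDerivWithin_eventuallyEq_of_hasDerivWithinAt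
    (F' := fun j t => linODEDeriv M B w x j t p) hs hderiv).eq_of_nhdsWithin ha

end LinearODE

/-- if `x` is continuous at `t_f`, satisfies `ẋ = A x + B w` before
`t_f` and `ẋ = Ā x + B w` after `t_f`, and `w` is `k`-times continuously differentiable
near `t_f`, then the jump of the `k`-th one-sided derivative of `x_p` at `t_f` is
`Δ_{t_f}(p,k) = e_pᵀ (Ā^k - A^k) x(t_f) + e_pᵀ (Ā^{k-1} - A^{k-1}) B w(t_f)
  + Σ_{m=0}^{k-2} e_pᵀ (Ā^m - A^m) B w^{(k-m-1)}(t_f)`. -/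
theorem jump_formula {n m : ℕ}
    (A Abar : Matrix (Fin n) (Fin n) ℝ) (B : Matrix (Fin n) (Fin m) ℝ)
    (tf : ℝ) (w : ℝ → Fin m → ℝ) (x : ℝ → Fin n → ℝ)
    (k : ℕ) (hk : 1 ≤ k)
    (hw : ContDiffAt ℝ k w tf)
    (hcont : ContinuousAt x tf)
    (hpre : ∀ t < tf, HasDerivAt x (A.mulVec (x t) + B.mulVec (w t)) t)
    (hpost : ∀ t > tf, HasDerivAt x (Abar.mulVec (x t) + B.mulVec (w t)) t)
    (p : Fin n) :
    jump x tf p k =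
      ((Abar ^ k - A ^ k).mulVec (x tf)) p
        + ((Abar ^ (k - 1) - A ^ (k - 1)).mulVec (B.mulVec (w tf))) p
        + ∑ r ∈ Finset.range (k - 1),
            ((Abar ^ r - A ^ r).mulVec (B.mulVec (iteratedDeriv (k - r - 1) w tf))) p := by
  have hw_deriv (s : Set ℝ) : ∀ᶠ t in 𝓝[s] tf,
      ∀ j < k, HasDerivWithinAt (iteratedDeriv j w) (iteratedDeriv (j + 1) w t) s t :=
    nhdsWithin_le_nhds <| hw.eventually_hasDerivAt_iteratedDeriv.mono
      fun t ht j hj => (ht j hj).hasDerivWithinAt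
  have hrhs_cont (M : Matrix (Fin n) (Fin n) ℝ) :
      ContinuousAt (fun t => M *ᵥ x t + B *ᵥ w t) tf := by
    have := hw.continuousAt
    fun_prop
  have hright : iteratedDerivWithin k (fun t => x t p) (Ici tf) tf =
      linODEDeriv Abar B w x k tf p :=
    iteratedDerivWithin_eq_linODEDeriv (uniqueDiffOn_Ici tf) self_mem_Ici
      (eventually_nhdsWithin_of_forall <| hasDerivWithinAt_Ici_of_hasDerivAt_of_gt hpost
        hcont.continuousWithinAt (hrhs_cont Abar).continuousWithinAt) (hw_deriv _) p
  have hleft : iteratedDerivWithin k (fun t => x t p) (Iic tf) tf =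
      linODEDeriv A B w x k tf p :=
    iteratedDerivWithin_eq_linODEDeriv (uniqueDiffOn_Iic tf) self_mem_Iic
      (eventually_nhdsWithin_of_forall <| hasDerivWithinAt_Iic_of_hasDerivAt_of_lt hpre
        hcont.continuousWithinAt (hrhs_cont A).continuousWithinAt) (hw_deriv _) p
  obtain ⟨j, rfl⟩ : ∃ j, k = j + 1 := ⟨k - 1, by omega⟩
  rw [jump, hright, hleft, linODEDeriv_eq, linODEDeriv_eq]
  simp only [Finset.sum_range_succ, Nat.add_sub_cancel, Nat.add_sub_cancel_left, Nat.sub_self,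
    iteratedDeriv_zero, Matrix.sub_mulVec, Pi.add_apply, Pi.sub_apply, Finset.sum_apply,
    Finset.sum_sub_distrib]
  ring
end
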